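/- The formal power series f_3(x) = (∑_{n≥0} C(2n,n) C(3n,n) x^n)^2 satisfies, as an identity of formal power series in z, (1+4z)^{-2} · f_3(z/(1+4z)^3) = (1−2z)^{-2} · f_3(z^2/(1−2z)^3). -/

import Mathlib

open PowerSeries

/-- Formal composition `f ∘ g` of power series, valid when `g` has zero constant term:
the `n`-th coefficient is `∑_{k=0}^{n} f_k · [z^n] g^k`. -/
noncomputable def psComp (f g : PowerSeries ℚ) : PowerSeries ℚ :=
  PowerSeries.mk fun n =>
    ∑ k ∈ Finset.range (n + 1), (PowerSeries.coeff (R := ℚ) k f) * PowerSeries.coeff (R := ℚ) n (g ^ k)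

noncomputable def f3 : PowerSeries ℚ :=
  (PowerSeries.mk fun n => ((2 * n).choose n : ℚ) * ((3 * n).choose n : ℚ)) ^ 2

/-!
Both sides are squares, so it suffices to show `F = G` for
`F = (1 + 4z)⁻¹ h(z / (1 + 4z)³)` and `G = (1 - 2z)⁻¹ h(z² / (1 - 2z)³)`, where
`h = ∑ C(2n,n) C(3n,n) zⁿ`. The recurrence `(n+1)² a(n+1) = 3 (3n+1) (3n+2) a(n)` says that `h`
satisfies the hypergeometric equation `θ²h = z (27θ² + 27θ + 6) h`, `θ = z d/dz`. Pushing this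
equation through the two substitutions shows that `F` and `G` both satisfy
`(1 + z)(1 - 8z) θ²y = z ((7 + 16z) θy + 2 (1 + 4z) y)`, the differential equation of the
generating function of the Franel numbers `∑ₖ C(n,k)³`. Its indicial equation at `0` is `n² = 0`,
so a power series solution is determined by its constant term, and `F`, `G` both start with `1`.
-/

theorem Derivation.map_ofNat {R A M : Type*} [CommSemiring R] [CommSemiring A] [AddCommMonoid M]
    [Algebra R A] [Module A M] [Module R M] (D : Derivation R A M) (n : ℕ) [n.AtLeastTwo] :
    D (no_index (OfNat.ofNat n)) = 0 :=
  D.map_natCast n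

namespace PowerSeries

variable {R : Type*} [CommRing R]

theorem constantCoeff_subst_of_constantCoeff_eq_zero {u : R⟦X⟧} (hu : constantCoeff u = 0)
    (f : R⟦X⟧) : constantCoeff (f.subst u) = constantCoeff f := by
  rw [← coeff_zero_eq_constantCoeff_apply, coeff_subst' (HasSubst.of_constantCoeff_zero' hu),
    finsum_eq_single _ 0]
  · simp
  · intro d hd
    simp [coeff_zero_eq_constantCoeff_apply, hu, zero_pow hd]

noncomputable def eulerDeriv (R : Type*) [CommRing R] : Derivation R R⟦X⟧ R⟦X⟧ :=
  (X : R⟦X⟧) • d⁄dX R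

theorem eulerDeriv_apply (f : R⟦X⟧) : eulerDeriv R f = X * d⁄dX R f := by
  rw [eulerDeriv, Derivation.smul_apply, smul_eq_mul]

theorem eulerDeriv_X : eulerDeriv R X = X := by
  simp [eulerDeriv_apply]

theorem coeff_eulerDeriv (f : R⟦X⟧) (n : ℕ) : coeff n (eulerDeriv R f) = n * coeff n f := by
  cases n with
  | zero => simp [eulerDeriv_apply]
  | succ n =>
    rw [eulerDeriv_apply, coeff_succ_X_mul, coeff_derivative, mul_comm]
    push_cast
    ring

theorem eulerDeriv_subst {f u r : R⟦X⟧} (hu : HasSubst u) (hr : eulerDeriv R u = r * u) :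
    eulerDeriv R (f.subst u) = r * (eulerDeriv R f).subst u := by
  rw [eulerDeriv_apply] at hr
  rw [eulerDeriv_apply, eulerDeriv_apply, derivative_subst hu, subst_mul hu, subst_X hu]
  linear_combination (d⁄dX R f).subst u * hr

theorem X_pow_dvd_eulerDeriv {f : R⟦X⟧} {n : ℕ} (h : X ^ n ∣ f) : X ^ n ∣ eulerDeriv R f := by
  rw [X_pow_dvd_iff] at h ⊢
  intro m hm
  rw [coeff_eulerDeriv, h m hm, mul_zero]

theorem eq_zero_of_eulerDeriv_sq_eq_X_mul [NoZeroDivisors R] [CharZero R] {W A B C : R⟦X⟧}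
    (hW : eulerDeriv R (eulerDeriv R W) =
      X * (A * eulerDeriv R (eulerDeriv R W) + B * eulerDeriv R W + C * W))
    (h0 : constantCoeff W = 0) : W = 0 := by
  suffices h : ∀ n, X ^ (n + 1) ∣ W by
    ext n
    exact X_pow_dvd_iff.mp (h n) n n.lt_succ_self
  intro n
  induction n with
  | zero => simpa [X_dvd_iff] using h0
  | succ n ih =>
    have h1 := X_pow_dvd_eulerDeriv ih
    have h2 := X_pow_dvd_eulerDeriv h1
    have hrhs : X ^ (n + 2) ∣ eulerDeriv R (eulerDeriv R W) := by
      rw [hW, pow_succ']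
      exact mul_dvd_mul_left X (dvd_add (dvd_add (dvd_mul_of_dvd_right h2 _)
        (dvd_mul_of_dvd_right h1 _)) (dvd_mul_of_dvd_right ih _))
    rw [X_pow_dvd_iff] at ih hrhs ⊢
    intro m hm
    rcases Nat.lt_succ_iff_lt_or_eq.mp hm with hm | rfl
    · exact ih m hm
    · have hcoeff := hrhs (n + 1) (by omega)
      rw [coeff_eulerDeriv, coeff_eulerDeriv, ← mul_assoc] at hcoeff
      exact (mul_eq_zero.mp hcoeff).resolve_left
        (mul_self_ne_zero.mpr (Nat.cast_ne_zero.mpr n.succ_ne_zero))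

end PowerSeries

theorem psComp_eq_subst {u : ℚ⟦X⟧} (hu : constantCoeff u = 0) (f : ℚ⟦X⟧) :
    psComp f u = f.subst u := by
  ext n
  rw [psComp, coeff_mk, coeff_subst' (HasSubst.of_constantCoeff_zero' hu)]
  refine (finsum_eq_sum_of_support_subset _ fun d hd => ?_).symm
  by_contra hdn
  refine hd ?_
  dsimp only
  rw [Finset.coe_range, Set.mem_Iio, not_lt] at hdn
  rw [coeff_of_lt_order n ((Nat.cast_lt.mpr hdn).trans_le
    (le_order_pow_of_constantCoeff_eq_zero d hu)), mul_zero]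

noncomputable def binomGF : ℚ⟦X⟧ := mk fun n => ((2 * n).choose n : ℚ) * ((3 * n).choose n : ℚ)

theorem f3_eq_binomGF_sq : f3 = binomGF ^ 2 := rfl

theorem choose_mul_choose_mul_factorial_pow (n : ℕ) :
    (2 * n).choose n * (3 * n).choose n * n.factorial ^ 3 = (3 * n).factorial := by
  have h2 := Nat.choose_mul_factorial_mul_factorial (show n ≤ 2 * n by omega)
  have h3 := Nat.choose_mul_factorial_mul_factorial (show n ≤ 3 * n by omega)
  rw [show 2 * n - n = n by omega] at h2
  rw [show 3 * n - n = 2 * n by omega, ← h2] at h3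
  rw [← h3]
  ring

theorem succ_sq_mul_choose_mul_choose (n : ℕ) :
    (n + 1) ^ 2 * ((2 * (n + 1)).choose (n + 1) * (3 * (n + 1)).choose (n + 1)) =
      3 * (3 * n + 1) * (3 * n + 2) * ((2 * n).choose n * (3 * n).choose n) := by
  refine Nat.eq_of_mul_eq_mul_right (by positivity : 0 < (n + 1) * n.factorial ^ 3) ?_
  have hs := choose_mul_choose_mul_factorial_pow (n + 1)
  rw [Nat.factorial_succ, show 3 * (n + 1) = 3 * n + 2 + 1 by ring, Nat.factorial_succ,
    Nat.factorial_succ, Nat.factorial_succ, ← choose_mul_choose_mul_factorial_pow n] at hs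
  linear_combination hs

theorem eulerDeriv_sq_binomGF :
    eulerDeriv ℚ (eulerDeriv ℚ binomGF) = X * (27 * eulerDeriv ℚ (eulerDeriv ℚ binomGF) +
      27 * eulerDeriv ℚ binomGF + 6 * binomGF) := by
  ext n
  cases n with
  | zero => simp [coeff_eulerDeriv]
  | succ n =>
    have h := congrArg (Nat.cast (R := ℚ)) (succ_sq_mul_choose_mul_choose n)
    push_cast at h
    simp only [coeff_eulerDeriv, coeff_succ_X_mul, map_add, ← map_ofNat C, coeff_C_mul, binomGF,
      coeff_mk]
    push_cast
    linear_combination h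

theorem subst_eulerDeriv_sq_binomGF {u : ℚ⟦X⟧} (hu : HasSubst u) :
    (eulerDeriv ℚ (eulerDeriv ℚ binomGF)).subst u =
      u * (27 * (eulerDeriv ℚ (eulerDeriv ℚ binomGF)).subst u +
        27 * (eulerDeriv ℚ binomGF).subst u + 6 * binomGF.subst u) := by
  have h := congrArg (substAlgHom hu) eulerDeriv_sq_binomGF
  simpa only [map_mul, map_add, map_ofNat, substAlgHom_X, coe_substAlgHom] using h

def FranelODE (y : ℚ⟦X⟧) : Prop :=
  (1 + X) * (1 - 8 * X) * eulerDeriv ℚ (eulerDeriv ℚ y) =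
    X * ((7 + 16 * X) * eulerDeriv ℚ y + 2 * (1 + 4 * X) * y)

theorem FranelODE.eq_of_constantCoeff_eq {y₁ y₂ : ℚ⟦X⟧} (h₁ : FranelODE y₁) (h₂ : FranelODE y₂)
    (h0 : constantCoeff y₁ = constantCoeff y₂) : y₁ = y₂ := by
  refine sub_eq_zero.mp (eq_zero_of_eulerDeriv_sq_eq_X_mul (A := 7 + 8 * X) (B := 7 + 16 * X)
    (C := 2 * (1 + 4 * X)) ?_ (by rw [map_sub, h0, sub_self]))
  unfold FranelODE at h₁ h₂
  simp only [map_sub]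
  linear_combination h₁ - h₂

-- With `j = (1 + 4x)⁻¹` and `sₖ = (θᵏh)(x j³)`, the two brackets on the left and on the right are
-- `θ²F` and `θF` for `F = j s₀`; likewise below with `j = (1 - 2x)⁻¹` and `sₖ = (θᵏh)(x² j³)`.
theorem franelODE_identity_left {K : Type*} [Field K] [CharZero K] {x j s0 s1 s2 : K}
    (hj : (1 + 4 * x) * j = 1) (hrel : s2 = x * j ^ 3 * (27 * s2 + 27 * s1 + 6 * s0)) :
    (1 + x) * (1 - 8 * x) * (j * (1 - 12 * x * j) ^ 2 * s2
      + (-20 * x * j ^ 2 + 144 * x ^ 2 * j ^ 3) * s1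
      + (-4 * x * j ^ 2 + 32 * x ^ 2 * j ^ 3) * s0) =
    x * ((7 + 16 * x) * (j * (1 - 12 * x * j) * s1 - 4 * x * j ^ 2 * s0)
      + 2 * (1 + 4 * x) * (j * s0)) := by
  have hj0 : j ≠ 0 := right_ne_zero_of_mul_eq_one hj
  obtain rfl : x = (1 - j) / (4 * j) := by field_simp; linear_combination hj
  linear_combination (norm := skip) (1 - 8 * ((1 - j) / (4 * j))) * hrel
  field_simp
  ring

theorem franelODE_identity_right {K : Type*} [Field K] [CharZero K] {x j s0 s1 s2 : K}
    (hj : (1 - 2 * x) * j = 1) (hrel : s2 = x ^ 2 * j ^ 3 * (27 * s2 + 27 * s1 + 6 * s0)) :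
    (1 + x) * (1 - 8 * x) * (j * (2 + 6 * x * j) ^ 2 * s2
      + (14 * x * j ^ 2 + 36 * x ^ 2 * j ^ 3) * s1
      + (2 * x * j ^ 2 + 8 * x ^ 2 * j ^ 3) * s0) =
    x * ((7 + 16 * x) * (j * (2 + 6 * x * j) * s1 + 2 * x * j ^ 2 * s0)
      + 2 * (1 + 4 * x) * (j * s0)) := by
  have hj0 : j ≠ 0 := right_ne_zero_of_mul_eq_one hj
  obtain rfl : x = (j - 1) / (2 * j) := by field_simp; linear_combination -hj
  linear_combination (norm := skip) 4 * (1 + (j - 1) / (2 * j)) * hrel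
  field_simp
  ring

theorem franelODE_left : FranelODE ((1 + 4 * X)⁻¹ * binomGF.subst (X * (1 + 4 * X)⁻¹ ^ 3)) := by
  set j : ℚ⟦X⟧ := (1 + 4 * X)⁻¹ with hj_def
  have hj : (1 + 4 * X) * j = 1 := PowerSeries.mul_inv_cancel _ (by simp)
  have hθj : eulerDeriv ℚ j = -4 * X * j ^ 2 := by
    simp only [hj_def, eulerDeriv_apply, derivative_inv', map_add, Derivation.map_one_eq_zero,
      Derivation.leibniz, derivative_X, Derivation.map_ofNat, smul_eq_mul]
    ring
  have hu : HasSubst (X * j ^ 3) := HasSubst.of_constantCoeff_zero' (by simp)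
  have hθu : eulerDeriv ℚ (X * j ^ 3) = (1 - 12 * X * j) * (X * j ^ 3) := by
    simp only [Derivation.leibniz, Derivation.leibniz_pow, hθj, eulerDeriv_X, smul_eq_mul,
      nsmul_eq_mul]
    ring
  have hS0 := eulerDeriv_subst hu hθu (f := binomGF)
  have hS1 := eulerDeriv_subst hu hθu (f := eulerDeriv ℚ binomGF)
  have hS2 := subst_eulerDeriv_sq_binomGF hu
  unfold FranelODE
  simp only [Derivation.leibniz, Derivation.leibniz_pow, smul_eq_mul, nsmul_eq_mul, Nat.cast_ofNat,
    map_add, map_sub, map_neg, Derivation.map_ofNat, Derivation.map_one_eq_zero, eulerDeriv_X,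
    hθj, hS0, hS1]
  -- `ring` cannot use `(1 + 4X) * j = 1`, so the identity is checked where `j` is an inverse.
  apply IsFractionRing.injective ℚ⟦X⟧ (FractionRing ℚ⟦X⟧)
  have := algebraRat.charZero (FractionRing ℚ⟦X⟧)
  replace hj := congrArg (algebraMap ℚ⟦X⟧ (FractionRing ℚ⟦X⟧)) hj
  replace hS2 := congrArg (algebraMap ℚ⟦X⟧ (FractionRing ℚ⟦X⟧)) hS2
  simp only [map_mul, map_add, map_sub, map_neg, map_one, map_zero, map_ofNat, map_pow] at hj hS2 ⊢
  linear_combination franelODE_identity_left hj hS2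

theorem franelODE_right :
    FranelODE ((1 - 2 * X)⁻¹ * binomGF.subst (X ^ 2 * (1 - 2 * X)⁻¹ ^ 3)) := by
  set j : ℚ⟦X⟧ := (1 - 2 * X)⁻¹ with hj_def
  have hj : (1 - 2 * X) * j = 1 := PowerSeries.mul_inv_cancel _ (by simp)
  have hθj : eulerDeriv ℚ j = 2 * X * j ^ 2 := by
    simp only [hj_def, eulerDeriv_apply, derivative_inv', map_sub, Derivation.map_one_eq_zero,
      Derivation.leibniz, derivative_X, Derivation.map_ofNat, smul_eq_mul]
    ring
  have hv : HasSubst (X ^ 2 * j ^ 3) := HasSubst.of_constantCoeff_zero' (by simp)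
  have hθv : eulerDeriv ℚ (X ^ 2 * j ^ 3) = (2 + 6 * X * j) * (X ^ 2 * j ^ 3) := by
    simp only [Derivation.leibniz, Derivation.leibniz_pow, hθj, eulerDeriv_X, smul_eq_mul,
      nsmul_eq_mul]
    ring
  have hS0 := eulerDeriv_subst hv hθv (f := binomGF)
  have hS1 := eulerDeriv_subst hv hθv (f := eulerDeriv ℚ binomGF)
  have hS2 := subst_eulerDeriv_sq_binomGF hv
  unfold FranelODE
  simp only [Derivation.leibniz, Derivation.leibniz_pow, smul_eq_mul, nsmul_eq_mul, Nat.cast_ofNat,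
    map_add, Derivation.map_ofNat, eulerDeriv_X, hθj, hS0, hS1]
  apply IsFractionRing.injective ℚ⟦X⟧ (FractionRing ℚ⟦X⟧)
  have := algebraRat.charZero (FractionRing ℚ⟦X⟧)
  replace hj := congrArg (algebraMap ℚ⟦X⟧ (FractionRing ℚ⟦X⟧)) hj
  replace hS2 := congrArg (algebraMap ℚ⟦X⟧ (FractionRing ℚ⟦X⟧)) hS2
  simp only [map_mul, map_add, map_sub, map_one, map_zero, map_ofNat, map_pow] at hj hS2 ⊢
  linear_combination franelODE_identity_right hj hS2

theorem functional_equation_f3 :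
    ((1 + 4 * X : PowerSeries ℚ)⁻¹) ^ 2 * psComp f3 (X * ((1 + 4 * X)⁻¹) ^ 3)
      = ((1 - 2 * X : PowerSeries ℚ)⁻¹) ^ 2 * psComp f3 (X ^ 2 * ((1 - 2 * X)⁻¹) ^ 3) := by
  have hu : constantCoeff (X * ((1 + 4 * X : ℚ⟦X⟧)⁻¹) ^ 3) = 0 := by simp
  have hv : constantCoeff (X ^ 2 * ((1 - 2 * X : ℚ⟦X⟧)⁻¹) ^ 3) = 0 := by simp
  rw [psComp_eq_subst hu, psComp_eq_subst hv, f3_eq_binomGF_sq,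
    subst_pow (.of_constantCoeff_zero' hu), subst_pow (.of_constantCoeff_zero' hv),
    ← mul_pow, ← mul_pow]
  congr 1
  refine franelODE_left.eq_of_constantCoeff_eq franelODE_right ?_
  simp [constantCoeff_subst_of_constantCoeff_eq_zero, hu, hv]
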